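/- Let β = ‖C₀‖·‖A‖·‖(Γ + AC₀A*)⁻¹‖·‖M‖, and suppose 0 ≤ δ < 1/β. Then there exists a unique bounded self-adjoint non-negative operator C(δ) : X → X with C(δ) = F(C(δ),δ). Moreover, the sequence defined by C₀(δ) = C₀ and C_{ℓ+1}(δ) = F(C_ℓ(δ),δ) converges to C(δ) geometrically fast: ‖C_ℓ(δ) − C(δ)‖ ≤ (βδ)^{2ℓ} ‖C₀ − C(δ)‖ for all ℓ ≥ 0. -/

import Mathlib

/-!
`F(·, δ)` maps non-negative operators to non-negative operators: writing `R` for the operator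
inverted in `F(B, δ)`, `R ≥ A C₀ A*` and completing the square give `C₀ A* R⁻¹ A C₀ ≤ C₀`.
On non-negative operators it is moreover `(βδ)²`-Lipschitz, by the resolvent identity
`F(B₁) - F(B₂) = δ² C₀ A* R₂⁻¹ M (B₁ - B₂) M* R₁⁻¹ A C₀` and the bound
`‖R⁻¹‖ ≤ ‖(Γ + A C₀ A*)⁻¹‖`, which holds because `R ≥ Γ + A C₀ A*`. The non-negative operators
form a closed subset of a Banach space, so Banach's fixed point theorem gives the result.
-/

open ContinuousLinearMap
open scoped RealInnerProductSpace

/-- The map `F(B,δ) = C₀ − C₀ A* (Γ + δ² M B M* + A C₀ A*)⁻¹ A C₀`. -/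
noncomputable def Fop {X Y : Type*}
    [NormedAddCommGroup X] [InnerProductSpace ℝ X] [CompleteSpace X]
    [NormedAddCommGroup Y] [InnerProductSpace ℝ Y] [FiniteDimensional ℝ Y]
    (A M : X →L[ℝ] Y) (C₀ : X →L[ℝ] X) (Γ : Y →L[ℝ] Y)
    (B : X →L[ℝ] X) (δ : ℝ) : X →L[ℝ] X :=
  C₀ - (C₀ ∘L (adjoint A) ∘L
    Ring.inverse (Γ + δ ^ 2 • (M ∘L B ∘L adjoint M) + A ∘L C₀ ∘L adjoint A)) ∘L A ∘L C₀

/-- The covariance iterates `C₀(δ) = C₀`, `C_{ℓ+1}(δ) = F(C_ℓ(δ),δ)`. -/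
noncomputable def covIter {X Y : Type*}
    [NormedAddCommGroup X] [InnerProductSpace ℝ X] [CompleteSpace X]
    [NormedAddCommGroup Y] [InnerProductSpace ℝ Y] [FiniteDimensional ℝ Y]
    (A M : X →L[ℝ] Y) (C₀ : X →L[ℝ] X) (Γ : Y →L[ℝ] Y) (δ : ℝ) : ℕ → (X →L[ℝ] X)
  | 0 => C₀
  | (n + 1) => Fop A M C₀ Γ (covIter A M C₀ Γ δ n) δ

namespace ContinuousLinearMap

variable {E F : Type*} [NormedAddCommGroup E] [InnerProductSpace ℝ E]
  [NormedAddCommGroup F] [InnerProductSpace ℝ F]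

theorem IsPositive.inner_mul_inner_self_le {T : E →L[ℝ] E} (hT : T.IsPositive) (x y : E) :
    ⟪T x, y⟫ * ⟪T x, y⟫ ≤ ⟪T x, x⟫ * ⟪T y, y⟫ := by
  have hquad : ∀ t : ℝ, 0 ≤ ⟪T y, y⟫ * (t * t) + 2 * ⟪T x, y⟫ * t + ⟪T x, x⟫ := fun t => by
    have hsymm : ⟪T y, x⟫ = ⟪T x, y⟫ := by
      rw [hT.inner_left_eq_inner_right, real_inner_comm]
    have := hT.inner_nonneg_left (x + t • y)
    simp only [map_add, map_smul, inner_add_left, inner_add_right, real_inner_smul_left,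
      real_inner_smul_right, hsymm] at this
    linarith
  have := discrim_le_zero hquad
  rw [discrim] at this
  linarith

theorem IsPositive.norm_sq_le_norm_ringInverse_mul_inner {T : E →L[ℝ] E} (hT : T.IsPositive)
    (hTu : IsUnit T) (u : E) : ‖u‖ ^ 2 ≤ ‖Ring.inverse T‖ * ⟪T u, u⟫ := by
  rcases eq_or_ne u 0 with rfl | hu
  · simp
  set K := Ring.inverse T
  have hTK : T (K u) = u := by
    simpa using DFunLike.congr_fun (Ring.mul_inverse_cancel T hTu) u
  have hcs := hT.inner_mul_inner_self_le (K u) u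
  rw [hTK, real_inner_self_eq_norm_sq, real_inner_comm] at hcs
  have hKu : ⟪K u, u⟫ ≤ ‖K‖ * ‖u‖ ^ 2 := by
    calc ⟪K u, u⟫ ≤ ‖K u‖ * ‖u‖ := real_inner_le_norm _ _
      _ ≤ ‖K‖ * ‖u‖ * ‖u‖ := by gcongr; exact le_opNorm K u
      _ = ‖K‖ * ‖u‖ ^ 2 := by ring
  refine le_of_mul_le_mul_left ?_ (by positivity : 0 < ‖u‖ ^ 2)
  calc ‖u‖ ^ 2 * ‖u‖ ^ 2 ≤ ⟪K u, u⟫ * ⟪T u, u⟫ := hcs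
    _ ≤ ‖K‖ * ‖u‖ ^ 2 * ⟪T u, u⟫ := by gcongr; exact hT.inner_nonneg_left u
    _ = ‖u‖ ^ 2 * (‖K‖ * ⟪T u, u⟫) := by ring

theorem IsPositive.norm_ringInverse_le_of_le {T R : E →L[ℝ] E} (hT : T.IsPositive)
    (hTu : IsUnit T) (hRu : IsUnit R) (hTR : T ≤ R) :
    ‖Ring.inverse R‖ ≤ ‖Ring.inverse T‖ := by
  refine opNorm_le_bound _ (norm_nonneg _) fun z => ?_
  set u := Ring.inverse R z
  rcases eq_or_ne u 0 with hu | hu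
  · rw [hu, norm_zero]; positivity
  have hRu : R u = z := by
    simpa using DFunLike.congr_fun (Ring.mul_inverse_cancel R hRu) z
  have hTR : ⟪T u, u⟫ ≤ ⟪R u, u⟫ := by
    have := hTR.inner_nonneg_left u
    rw [sub_apply, inner_sub_left] at this
    linarith
  refine le_of_mul_le_mul_left ?_ (norm_pos_iff.2 hu)
  calc ‖u‖ * ‖u‖ = ‖u‖ ^ 2 := by ring
    _ ≤ ‖Ring.inverse T‖ * ⟪T u, u⟫ := hT.norm_sq_le_norm_ringInverse_mul_inner hTu u
    _ ≤ ‖Ring.inverse T‖ * (‖z‖ * ‖u‖) := by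
      gcongr
      exact hTR.trans (hRu ▸ real_inner_le_norm _ _)
    _ = ‖u‖ * (‖Ring.inverse T‖ * ‖z‖) := by ring

theorem isUnit_of_forall_inner_pos_of_le [FiniteDimensional ℝ F] {Γ S : F →L[ℝ] F}
    (hΓ : ∀ y, y ≠ 0 → 0 < ⟪Γ y, y⟫) (hΓS : Γ ≤ S) : IsUnit S := by
  have hinj : Function.Injective (S : F →ₗ[ℝ] F) := by
    refine (injective_iff_map_eq_zero _).2 fun y hy => by_contra fun hy0 => ?_
    have := hΓS.inner_nonneg_left y
    rw [sub_apply, inner_sub_left] at this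
    have : ⟪S y, y⟫ = 0 := by simpa using congrArg (⟪·, y⟫) hy
    linarith [hΓ y hy0]
  exact isUnit_iff_bijective.2 ⟨hinj, LinearMap.injective_iff_surjective.1 hinj⟩

variable [CompleteSpace E]

theorem isClosed_setOf_isPositive : IsClosed {T : E →L[ℝ] E | T.IsPositive} := by
  simp only [isPositive_iff', Set.ofPred_and, Set.ofPred_forall]
  exact (isClosed_eq continuous_star continuous_id).inter <| isClosed_iInter fun x =>
    isClosed_le continuous_const
      ((continuous_id.clm_apply continuous_const).inner continuous_const)

variable [CompleteSpace F]

theorem isPositive_sub_comp_ringInverse_comp {C : E →L[ℝ] E} {R : F →L[ℝ] F} (A : E →L[ℝ] F)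
    (hC : C.IsPositive) (hRu : IsUnit R) (hR : A ∘L C ∘L adjoint A ≤ R) :
    (C - (C ∘L adjoint A ∘L Ring.inverse R) ∘L A ∘L C).IsPositive := by
  set J := Ring.inverse R
  have hJ : IsSelfAdjoint J := by
    have : R.IsPositive := by simpa using hR.add (hC.conj_adjoint A)
    exact this.isSelfAdjoint.ringInverse
  rw [isPositive_iff']
  refine ⟨hC.isSelfAdjoint.sub ?_, fun x => ?_⟩
  · have := hJ.conj_adjoint (C ∘L adjoint A)
    rwa [adjoint_comp, adjoint_adjoint, hC.isSelfAdjoint.adjoint_eq] at this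
  -- `0 ≤ ⟪C (x - A* y), x - A* y⟫ + ⟪(R - A C A*) y, y⟫` at `y = R⁻¹ A C x`
  set z := A (C x)
  set y := J z
  have hRy : R y = z := by
    simpa using DFunLike.congr_fun (Ring.mul_inverse_cancel R hRu) z
  have hsq := (hC.inner_nonneg_left (x - adjoint A y)).trans
    (le_add_of_nonneg_right (hR.inner_nonneg_left y))
  simp only [sub_apply, map_sub, inner_sub_left, inner_sub_right, comp_apply, hRy,
    adjoint_inner_left, adjoint_inner_right, hC.inner_left_eq_inner_right] at hsq ⊢
  linarith [real_inner_comm y (A (C x))]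

end ContinuousLinearMap

theorem existsUnique_fixedPt_of_dist_le_mul {α : Type*} [MetricSpace α] [CompleteSpace α]
    {s : Set α} (hs : IsClosed s) (hsne : s.Nonempty) {f : α → α} (hfs : Set.MapsTo f s s)
    {K : ℝ} (hK₀ : 0 ≤ K) (hK₁ : K < 1)
    (hf : ∀ x ∈ s, ∀ y ∈ s, dist (f x) (f y) ≤ K * dist x y) :
    ∃! x, x ∈ s ∧ f x = x := by
  have : CompleteSpace s := hs.completeSpace_coe
  have : Nonempty s := hsne.to_subtype
  have hcontr : ContractingWith ⟨K, hK₀⟩ (hfs.restrict f s s) :=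
    ⟨hK₁, LipschitzWith.of_dist_le_mul fun x y => hf x x.2 y y.2⟩
  set x := ContractingWith.fixedPoint _ hcontr
  refine ⟨x, ⟨x.2, congrArg Subtype.val hcontr.fixedPoint_isFixedPt⟩, fun y ⟨hy, hfy⟩ => ?_⟩
  exact congrArg Subtype.val (hcontr.fixedPoint_unique (x := ⟨y, hy⟩) (Subtype.ext hfy))

section

variable {X Y : Type*} [NormedAddCommGroup X] [InnerProductSpace ℝ X] [CompleteSpace X]
  [NormedAddCommGroup Y] [InnerProductSpace ℝ Y] [FiniteDimensional ℝ Y]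
  (A M : X →L[ℝ] Y) (C₀ : X →L[ℝ] X) (Γ : Y →L[ℝ] Y) {B B₁ B₂ : X →L[ℝ] X} {δ : ℝ}

noncomputable def innovationCov (B : X →L[ℝ] X) (δ : ℝ) : Y →L[ℝ] Y :=
  Γ + δ ^ 2 • (M ∘L B ∘L adjoint M) + A ∘L C₀ ∘L adjoint A

theorem Fop_eq : Fop A M C₀ Γ B δ =
    C₀ - (C₀ ∘L adjoint A ∘L Ring.inverse (innovationCov A M C₀ Γ B δ)) ∘L A ∘L C₀ := rfl

theorem innovationCov_sub_innovationCov :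
    innovationCov A M C₀ Γ B₁ δ - innovationCov A M C₀ Γ B₂ δ
      = δ ^ 2 • (M ∘L (B₁ - B₂) ∘L adjoint M) := by
  simp only [innovationCov, comp_sub, sub_comp, smul_sub]
  abel

theorem le_innovationCov (hB : B.IsPositive) :
    Γ + A ∘L C₀ ∘L adjoint A ≤ innovationCov A M C₀ Γ B δ := by
  rw [le_def, innovationCov, add_right_comm, add_sub_cancel_left]
  exact (hB.conj_adjoint M).smul_of_nonneg (sq_nonneg δ)

theorem self_le_add_conj (hC₀ : C₀.IsPositive) : Γ ≤ Γ + A ∘L C₀ ∘L adjoint A := by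
  rw [le_def, add_sub_cancel_left]
  exact hC₀.conj_adjoint A

theorem isUnit_innovationCov (hC₀ : C₀.IsPositive) (hΓpos : ∀ y : Y, y ≠ 0 → 0 < ⟪Γ y, y⟫)
    (hB : B.IsPositive) : IsUnit (innovationCov A M C₀ Γ B δ) :=
  isUnit_of_forall_inner_pos_of_le hΓpos
    ((self_le_add_conj A C₀ Γ hC₀).trans (le_innovationCov A M C₀ Γ hB))

theorem Fop_isPositive (hC₀ : C₀.IsPositive) (hΓ : Γ.IsPositive)
    (hΓpos : ∀ y : Y, y ≠ 0 → 0 < ⟪Γ y, y⟫) (hB : B.IsPositive) :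
    (Fop A M C₀ Γ B δ).IsPositive := by
  refine isPositive_sub_comp_ringInverse_comp A hC₀
    (isUnit_innovationCov A M C₀ Γ hC₀ hΓpos hB) (le_trans ?_ (le_innovationCov A M C₀ Γ hB))
  rw [le_def, add_sub_cancel_right]
  exact hΓ

theorem Fop_sub_Fop (hC₀ : C₀.IsPositive) (hΓpos : ∀ y : Y, y ≠ 0 → 0 < ⟪Γ y, y⟫)
    (h₁ : B₁.IsPositive) (h₂ : B₂.IsPositive) :
    Fop A M C₀ Γ B₁ δ - Fop A M C₀ Γ B₂ δ
      = δ ^ 2 • (C₀ ∘L adjoint A ∘L Ring.inverse (innovationCov A M C₀ Γ B₂ δ) ∘L M)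
          ∘L (B₁ - B₂)
          ∘L (adjoint M ∘L Ring.inverse (innovationCov A M C₀ Γ B₁ δ) ∘L A ∘L C₀) := by
  have hJ := Ring.inverse_sub_inverse
    (iff_of_true (isUnit_innovationCov A M C₀ Γ (δ := δ) hC₀ hΓpos h₂)
      (isUnit_innovationCov A M C₀ Γ (δ := δ) hC₀ hΓpos h₁))
  rw [innovationCov_sub_innovationCov] at hJ
  calc Fop A M C₀ Γ B₁ δ - Fop A M C₀ Γ B₂ δ
      = (C₀ ∘L adjoint A) ∘L (Ring.inverse (innovationCov A M C₀ Γ B₂ δ)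
          - Ring.inverse (innovationCov A M C₀ Γ B₁ δ)) ∘L (A ∘L C₀) := by
        simp only [Fop_eq, comp_sub, sub_comp, sub_sub_sub_cancel_left]; rfl
    _ = _ := by rw [hJ]; ext x; simp

theorem norm_Fop_sub_Fop_le (hC₀ : C₀.IsPositive) (hΓ : Γ.IsPositive)
    (hΓpos : ∀ y : Y, y ≠ 0 → 0 < ⟪Γ y, y⟫) (h₁ : B₁.IsPositive) (h₂ : B₂.IsPositive) :
    ‖Fop A M C₀ Γ B₁ δ - Fop A M C₀ Γ B₂ δ‖
      ≤ (‖C₀‖ * ‖A‖ * ‖Ring.inverse (Γ + A ∘L C₀ ∘L adjoint A)‖ * ‖M‖ * δ) ^ 2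
        * ‖B₁ - B₂‖ := by
  set K := Ring.inverse (Γ + A ∘L C₀ ∘L adjoint A)
  have hJ : ∀ {B : X →L[ℝ] X}, B.IsPositive →
      ‖Ring.inverse (innovationCov A M C₀ Γ B δ)‖ ≤ ‖K‖ := fun hB =>
    (hΓ.add (hC₀.conj_adjoint A)).norm_ringInverse_le_of_le
      (isUnit_of_forall_inner_pos_of_le hΓpos (self_le_add_conj A C₀ Γ hC₀))
      (isUnit_innovationCov A M C₀ Γ hC₀ hΓpos hB) (le_innovationCov A M C₀ Γ hB)
  set P := C₀ ∘L adjoint A ∘L Ring.inverse (innovationCov A M C₀ Γ B₂ δ) ∘L M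
  set Q := adjoint M ∘L Ring.inverse (innovationCov A M C₀ Γ B₁ δ) ∘L A ∘L C₀
  have hP : ‖P‖ ≤ ‖C₀‖ * ‖A‖ * ‖K‖ * ‖M‖ := by
    grw [opNorm_comp_le, opNorm_comp_le, opNorm_comp_le, adjoint.norm_map, hJ h₂]
    exact (by ring : _ = _).le
  have hQ : ‖Q‖ ≤ ‖C₀‖ * ‖A‖ * ‖K‖ * ‖M‖ := by
    grw [opNorm_comp_le, opNorm_comp_le, opNorm_comp_le, adjoint.norm_map, hJ h₁]
    exact (by ring : _ = _).le
  rw [Fop_sub_Fop A M C₀ Γ hC₀ hΓpos h₁ h₂, norm_smul, Real.norm_of_nonneg (sq_nonneg δ)]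
  calc δ ^ 2 * ‖P ∘L (B₁ - B₂) ∘L Q‖ ≤ δ ^ 2 * (‖P‖ * (‖B₁ - B₂‖ * ‖Q‖)) := by
        grw [opNorm_comp_le P, opNorm_comp_le (B₁ - B₂)]
    _ ≤ δ ^ 2 * ((‖C₀‖ * ‖A‖ * ‖K‖ * ‖M‖) * (‖B₁ - B₂‖ * (‖C₀‖ * ‖A‖ * ‖K‖ * ‖M‖))) := by
        grw [hP, hQ]
    _ = _ := by ring

theorem covIter_isPositive (hC₀ : C₀.IsPositive) (hΓ : Γ.IsPositive)
    (hΓpos : ∀ y : Y, y ≠ 0 → 0 < ⟪Γ y, y⟫) (ℓ : ℕ) : (covIter A M C₀ Γ δ ℓ).IsPositive := by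
  induction ℓ with
  | zero => exact hC₀
  | succ ℓ ih => exact Fop_isPositive A M C₀ Γ hC₀ hΓ hΓpos ih

theorem norm_covIter_sub_le (hC₀ : C₀.IsPositive) (hΓ : Γ.IsPositive)
    (hΓpos : ∀ y : Y, y ≠ 0 → 0 < ⟪Γ y, y⟫) {C : X →L[ℝ] X} (hC : C.IsPositive)
    (hCF : Fop A M C₀ Γ C δ = C) (ℓ : ℕ) :
    ‖covIter A M C₀ Γ δ ℓ - C‖
      ≤ ((‖C₀‖ * ‖A‖ * ‖Ring.inverse (Γ + A ∘L C₀ ∘L adjoint A)‖ * ‖M‖ * δ) ^ 2) ^ ℓ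
        * ‖C₀ - C‖ := by
  set q := (‖C₀‖ * ‖A‖ * ‖Ring.inverse (Γ + A ∘L C₀ ∘L adjoint A)‖ * ‖M‖ * δ) ^ 2
  induction ℓ with
  | zero => simp [covIter]
  | succ ℓ ih =>
    calc ‖covIter A M C₀ Γ δ (ℓ + 1) - C‖
        = ‖Fop A M C₀ Γ (covIter A M C₀ Γ δ ℓ) δ - Fop A M C₀ Γ C δ‖ := by
          rw [covIter, hCF]
      _ ≤ q * ‖covIter A M C₀ Γ δ ℓ - C‖ :=
          norm_Fop_sub_Fop_le A M C₀ Γ hC₀ hΓ hΓpos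
            (covIter_isPositive A M C₀ Γ hC₀ hΓ hΓpos ℓ) hC
      _ ≤ q * (q ^ ℓ * ‖C₀ - C‖) := by gcongr
      _ = q ^ (ℓ + 1) * ‖C₀ - C‖ := by ring

end

/-- For `β = ‖C₀‖·‖A‖·‖(Γ + A C₀ A*)⁻¹‖·‖M‖` and `0 ≤ δ < 1/β`, there is a unique bounded
self-adjoint non-negative operator `C(δ)` with `C(δ) = F(C(δ),δ)`, and the iterates
`C₀(δ) = C₀`, `C_{ℓ+1}(δ) = F(C_ℓ(δ),δ)` converge to it geometrically fast:
`‖C_ℓ(δ) − C(δ)‖ ≤ (βδ)^{2ℓ} ‖C₀ − C(δ)‖` for all `ℓ ≥ 0`. -/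
theorem stmt_3 {X Y : Type*}
    [NormedAddCommGroup X] [InnerProductSpace ℝ X] [CompleteSpace X]
    [NormedAddCommGroup Y] [InnerProductSpace ℝ Y] [FiniteDimensional ℝ Y]
    (A M : X →L[ℝ] Y) (C₀ : X →L[ℝ] X) (Γ : Y →L[ℝ] Y)
    (hC₀ : C₀.IsPositive) (hΓ : Γ.IsPositive)
    (hΓpos : ∀ y : Y, y ≠ 0 → 0 < ⟪Γ y, y⟫)
    (β : ℝ)
    (hβ : β = ‖C₀‖ * ‖A‖ * ‖Ring.inverse (Γ + A ∘L C₀ ∘L adjoint A)‖ * ‖M‖)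
    (δ : ℝ) (hδ0 : 0 ≤ δ) (hδ1 : β * δ < 1) :
    (∃! C : X →L[ℝ] X, C.IsPositive ∧ Fop A M C₀ Γ C δ = C) ∧
      ∀ C : X →L[ℝ] X, C.IsPositive → Fop A M C₀ Γ C δ = C →
        ∀ ℓ : ℕ, ‖covIter A M C₀ Γ δ ℓ - C‖ ≤ (β * δ) ^ (2 * ℓ) * ‖C₀ - C‖ := by
  subst hβ
  have hq : (‖C₀‖ * ‖A‖ * ‖Ring.inverse (Γ + A ∘L C₀ ∘L adjoint A)‖ * ‖M‖ * δ) ^ 2 < 1 :=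
    pow_lt_one₀ (by positivity) hδ1 two_ne_zero
  refine ⟨existsUnique_fixedPt_of_dist_le_mul isClosed_setOf_isPositive ⟨C₀, hC₀⟩
    (fun B hB => Fop_isPositive A M C₀ Γ hC₀ hΓ hΓpos hB) (sq_nonneg _) hq
    fun B₁ h₁ B₂ h₂ => ?_, fun C hC hCF ℓ => ?_⟩
  · simpa only [dist_eq_norm] using norm_Fop_sub_Fop_le A M C₀ Γ hC₀ hΓ hΓpos h₁ h₂
  · rw [pow_mul]
    exact norm_covIter_sub_le A M C₀ Γ hC₀ hΓ hΓpos hC hCF ℓ
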